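/- There exists an absolute constant C > 0 with the following property. Let n ≥ 1 and let S ⊂ [0,1) be finite with |S| ≥ 2 and |τ − τ'|_T ≥ C(1 + log|S|)/n for all distinct τ, τ' ∈ S. Set κ = 2π·√(n(n+1)/3) (so κ² = |D_N''(0)|), and define the S×S matrices (D₀)_{τ,τ'} = D_N(τ − τ'), (D₁)_{τ,τ'} = D_N'(τ − τ'), (D₂)_{τ,τ'} = D_N''(τ − τ'). Then the 2|S| × 2|S| block matrix [[D₀, κ⁻¹D₁], [−κ⁻¹D₁, −κ⁻²D₂]] is invertible. -/

import Mathlib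

/-- The normalized Dirichlet kernel `D_N(θ) = (1/(2n+1)) ∑_{k=-n}^{n} e^{2πikθ}`. -/
noncomputable def DN (n : ℕ) (θ : ℝ) : ℝ :=
  (1 / (2 * (n : ℝ) + 1)) *
    (∑ k ∈ Finset.Icc (-(n : ℤ)) (n : ℤ),
      Complex.exp (2 * (Real.pi : ℂ) * Complex.I * (k : ℂ) * (θ : ℂ))).re

/-- The wrap-around (modulo 1) distance `|x|_T = min_{m ∈ ℤ} |x − m|`. -/
noncomputable def torusDist (x : ℝ) : ℝ :=
  sInf (Set.range fun m : ℤ => |x - (m : ℝ)|)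

/-!
With `C = 1` the separation hypothesis forces `|S| ≤ n`. Since
`D_N^{(j)}(θ) = (2n+1)⁻¹ ∑_{|k| ≤ n} (2πik)^j e^{2πikθ}`, the block matrix is
`(2n+1)⁻¹ V Vᴴ`, where the rows of `V` are the vectors `(e^{2πikτ})_{|k| ≤ n}` and
`(-κ⁻¹ 2πik e^{2πikτ})_{|k| ≤ n}`, `τ ∈ S`. A linear relation between these rows is an
exponential polynomial `∑_τ (a_τ + b_τ k) z_τ^k` with distinct nodes `z_τ = e^{2πiτ}`
vanishing at the `2n + 1 ≥ 2|S|` integers `|k| ≤ n`; pairing it with Hermite interpolation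
polynomials (values and first derivatives prescribed at the nodes) shows that all `a_τ, b_τ`
vanish. So `V Vᴴ` is positive definite.
-/

open Finset Polynomial

section ConfluentVandermonde

variable {K ι : Type*} [Field K] [Fintype ι]

lemma mul_eval_derivative_C_mul_X_pow (x c : K) (m : ℕ) :
    x * (derivative (C c * X ^ m)).eval x = m * c * x ^ m := by
  cases m with
  | zero => simp
  | succ m => rw [derivative_C_mul_X_pow, eval_C_mul, eval_X_pow, Nat.add_sub_cancel]; ring

lemma sum_eval_add_eval_derivative_eq_zero {N : ℕ} {z a b : ι → K}
    (h : ∀ m ≤ N, ∑ i, (a i + b i * m) * z i ^ m = 0) {P : K[X]} (hP : P.natDegree ≤ N) :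
    ∑ i, (a i * P.eval (z i) + b i * z i * (derivative P).eval (z i)) = 0 := by
  have hterm : ∀ i, a i * P.eval (z i) + b i * z i * (derivative P).eval (z i) =
      ∑ m ∈ range (N + 1), P.coeff m * ((a i + b i * m) * z i ^ m) := by
    intro i
    conv_lhs => rw [P.as_sum_range_C_mul_X_pow' (Nat.lt_succ_of_le hP)]
    simp only [eval_finsetSum, derivative_sum, mul_sum, ← sum_add_distrib]
    refine sum_congr rfl fun m _ => ?_
    rw [mul_assoc (b i), mul_eval_derivative_C_mul_X_pow, eval_C_mul, eval_X_pow]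
    ring
  rw [sum_congr rfl fun i _ => hterm i, sum_comm]
  exact sum_eq_zero fun m hm => by
    rw [← mul_sum, h m (Nat.lt_succ_iff.mp (mem_range.mp hm)), mul_zero]

lemma eval_eq_zero_and_eval_derivative_eq_zero_of_sq_dvd {R : Type*} [CommRing R]
    {P : R[X]} {x : R} (h : (X - C x) ^ 2 ∣ P) :
    P.eval x = 0 ∧ (derivative P).eval x = 0 := by
  obtain ⟨Q, rfl⟩ := h
  simp [derivative_sq]

theorem eq_zero_of_forall_sum_mul_pow_eq_zero {N : ℕ} {z a b : ι → K}
    (hz : Function.Injective z) (hz0 : ∀ i, z i ≠ 0) (hN : 2 * Fintype.card ι ≤ N + 1)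
    (h : ∀ m ≤ N, ∑ i, (a i + b i * m) * z i ^ m = 0) : a = 0 ∧ b = 0 := by
  classical
  -- `Q i₀ ^ 2 * R` has a double root at every node other than `z i₀`.
  let Q (i₀ : ι) : K[X] := ∏ j ∈ univ.erase i₀, (X - C (z j))
  have hQ (i₀ : ι) : (Q i₀).eval (z i₀) ≠ 0 := by
    simp only [Q, eval_prod, eval_sub, eval_X, eval_C]
    exact prod_ne_zero_iff.mpr fun j hj => sub_ne_zero.mpr (hz.ne (ne_of_mem_erase hj).symm)
  have hsingle (i₀ : ι) (R : K[X]) (hR : R.natDegree ≤ 1) :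
      a i₀ * (Q i₀ ^ 2 * R).eval (z i₀) +
        b i₀ * z i₀ * (derivative (Q i₀ ^ 2 * R)).eval (z i₀) = 0 := by
    have hdeg : (Q i₀ ^ 2 * R).natDegree ≤ N := by
      have hcard : (univ.erase i₀).card + 1 = Fintype.card ι := by
        rw [card_erase_add_one (mem_univ i₀), card_univ]
      refine natDegree_mul_le.trans ?_
      rw [natDegree_pow, natDegree_finsetProd_X_sub_C_eq_card]
      omega
    have hsum := sum_eval_add_eval_derivative_eq_zero h hdeg
    rwa [Fintype.sum_eq_single i₀ fun j hj => ?_] at hsum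
    have hdvd : (X - C (z j)) ^ 2 ∣ Q i₀ ^ 2 * R :=
      (pow_dvd_pow_of_dvd
        (dvd_prod_of_mem (fun j => X - C (z j)) (mem_erase.mpr ⟨hj, mem_univ j⟩)) 2).mul_right R
    obtain ⟨h0, h1⟩ := eval_eq_zero_and_eval_derivative_eq_zero_of_sq_dvd hdvd
    rw [h0, h1]
    ring
  have hb : b = 0 := funext fun i₀ => by
    have := hsingle i₀ (X - C (z i₀)) (by rw [natDegree_X_sub_C])
    simpa [derivative_mul, hQ i₀, hz0 i₀] using this
  refine ⟨funext fun i₀ => ?_, hb⟩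
  have := hsingle i₀ 1 (by simp)
  simpa [hb, hQ i₀] using this

theorem eq_zero_of_forall_sum_mul_zpow_eq_zero {n : ℕ} {z a b : ι → K}
    (hz : Function.Injective z) (hz0 : ∀ i, z i ≠ 0) (hcard : Fintype.card ι ≤ n)
    (h : ∀ k ∈ Icc (-(n : ℤ)) n, ∑ i, (a i + b i * k) * z i ^ k = 0) : a = 0 ∧ b = 0 := by
  -- substitute `k = m - n` to move the window `[-n, n]` to `[0, 2n]`
  obtain ⟨ha', hb'⟩ := eq_zero_of_forall_sum_mul_pow_eq_zero (N := 2 * n)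
    (a := fun i => (a i - n * b i) * z i ^ (-(n : ℤ))) (b := fun i => b i * z i ^ (-(n : ℤ)))
    hz hz0 (by omega) fun m hm => by
      rw [← h (m - n) (by simp only [mem_Icc]; omega)]
      refine sum_congr rfl fun i _ => ?_
      push_cast
      rw [zpow_sub₀ (hz0 i), zpow_neg, zpow_natCast, zpow_natCast]
      ring
  have hb : b = 0 := funext fun i => by
    simpa [hz0 i] using congrFun hb' i
  refine ⟨funext fun i => ?_, hb⟩
  simpa [hb, hz0 i] using congrFun ha' i

end ConfluentVandermonde

open Complex ComplexConjugate Matrix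

noncomputable def expMode (k : ℤ) (θ : ℝ) : ℂ := exp (2 * Real.pi * I * k * θ)

lemma conj_expMode (k : ℤ) (θ : ℝ) : conj (expMode k θ) = expMode (-k) θ := by
  rw [expMode, expMode, ← exp_conj]
  simp [map_ofNat]

lemma expMode_mul_conj (k : ℤ) (x y : ℝ) :
    expMode k x * conj (expMode k y) = expMode k (x - y) := by
  rw [conj_expMode, expMode, expMode, expMode, ← exp_add]
  push_cast
  ring_nf

lemma expMode_eq_zpow (k : ℤ) (θ : ℝ) : expMode k θ = expMode 1 θ ^ k := by
  rw [expMode, expMode, ← exp_int_mul]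
  push_cast
  ring_nf

lemma hasDerivAt_expMode (k : ℤ) (θ : ℝ) :
    HasDerivAt (expMode k) (2 * Real.pi * I * k * expMode k θ) θ := by
  have h := ((hasDerivAt_id (θ : ℂ)).const_mul (2 * Real.pi * I * k)).comp_ofReal
  rw [mul_one] at h
  exact h.cexp.congr_deriv (mul_comm _ _)

lemma injOn_expMode_one : Set.InjOn (expMode 1) (Set.Ico 0 1) := by
  intro x hx y hy hxy
  obtain ⟨m, hm⟩ := exp_eq_exp_iff_exists_int.mp hxy
  have hm' : x = y + m := by
    have h2 : (2 * Real.pi * I) * ((x : ℂ) - y - m) = 0 := by linear_combination hm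
    have := (mul_eq_zero.mp h2).resolve_left (by simp [Real.pi_ne_zero])
    exact_mod_cast (by linear_combination this : (x : ℂ) = y + m)
  have : m = 0 := by
    obtain ⟨hx0, hx1⟩ := hx; obtain ⟨hy0, hy1⟩ := hy
    have h1 : m < 1 := by exact_mod_cast (by linarith : (m : ℝ) < 1)
    have h2 : -1 < m := by exact_mod_cast (by linarith : (-1 : ℝ) < m)
    omega
  simpa [this] using hm'

noncomputable def dirichletSum (n j : ℕ) (θ : ℝ) : ℂ :=
  ∑ k ∈ Icc (-(n : ℤ)) n, (2 * Real.pi * I * k) ^ j * expMode k θ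

lemma conj_dirichletSum (n j : ℕ) (θ : ℝ) :
    conj (dirichletSum n j θ) = dirichletSum n j θ := by
  rw [dirichletSum, map_sum]
  refine sum_nbij' Neg.neg Neg.neg (fun k hk => ?_) (fun k hk => ?_) (by simp) (by simp)
    fun k _ => ?_
  · simp only [mem_Icc] at hk ⊢; omega
  · simp only [mem_Icc] at hk ⊢; omega
  · simp [conj_expMode, map_ofNat]

lemma hasDerivAt_re_dirichletSum (n j : ℕ) (θ : ℝ) :
    HasDerivAt (fun t => (dirichletSum n j t).re) (dirichletSum n (j + 1) θ).re θ := by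
  have h : HasDerivAt (dirichletSum n j) (dirichletSum n (j + 1) θ) θ := by
    unfold dirichletSum
    exact HasDerivAt.fun_sum fun k _ =>
      ((hasDerivAt_expMode k θ).const_mul _).congr_deriv (by ring)
  exact reCLM.hasFDerivAt.comp_hasDerivAt θ h

lemma iteratedDeriv_DN (n j : ℕ) :
    iteratedDeriv j (DN n) = fun θ => (2 * n + 1 : ℝ)⁻¹ * (dirichletSum n j θ).re := by
  induction j with
  | zero => ext θ; simp [DN, dirichletSum, expMode]
  | succ j ih =>
    ext θ
    rw [iteratedDeriv_succ, ih]
    exact ((hasDerivAt_re_dirichletSum n j θ).const_mul _).deriv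

lemma ofReal_iteratedDeriv_DN (n j : ℕ) (θ : ℝ) :
    ((iteratedDeriv j (DN n) θ : ℝ) : ℂ) = (2 * n + 1 : ℂ)⁻¹ * dirichletSum n j θ := by
  rw [iteratedDeriv_DN, ofReal_mul, conj_eq_iff_re.mp (conj_dirichletSum n j θ)]
  push_cast
  rfl

noncomputable def interpolationMatrix (n : ℕ) (κ : ℝ) (S : Finset ℝ) :
    Matrix (S ⊕ S) (S ⊕ S) ℝ :=
  Matrix.fromBlocks
    (Matrix.of fun τ τ' : S => DN n ((τ : ℝ) - (τ' : ℝ)))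
    (κ⁻¹ • Matrix.of fun τ τ' : S => deriv (DN n) ((τ : ℝ) - (τ' : ℝ)))
    (-(κ⁻¹ • Matrix.of fun τ τ' : S => deriv (DN n) ((τ : ℝ) - (τ' : ℝ))))
    (-((κ ^ 2)⁻¹ •
      Matrix.of fun τ τ' : S => deriv (deriv (DN n)) ((τ : ℝ) - (τ' : ℝ))))

noncomputable def fourierRows (n : ℕ) (S : Finset ℝ) (w : ℤ → ℂ) :
    Matrix S (Icc (-(n : ℤ)) n) ℂ :=
  Matrix.of fun τ k => w k * expMode k τ

lemma fourierRows_mul_conjTranspose {n j : ℕ} {S : Finset ℝ} {w w' : ℤ → ℂ} {c : ℝ}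
    (hw : ∀ k : ℤ, w k * conj (w' k) = c * (2 * Real.pi * I * k) ^ j) :
    fourierRows n S w * (fourierRows n S w')ᴴ =
      (2 * n + 1 : ℂ) • (Matrix.of fun τ τ' : S =>
        c * iteratedDeriv j (DN n) ((τ : ℝ) - (τ' : ℝ))).map ofReal := by
  ext τ τ'
  simp only [Matrix.mul_apply, fourierRows, Matrix.conjTranspose_apply, Matrix.of_apply,
    Matrix.smul_apply, Matrix.map_apply, ofReal_mul, ofReal_iteratedDeriv_DN, dirichletSum,
    smul_eq_mul, star_mul', RCLike.star_def]
  have hN : (2 * n + 1 : ℂ) ≠ 0 := by exact_mod_cast (by omega : 2 * n + 1 ≠ 0)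
  rw [mul_left_comm, mul_inv_cancel_left₀ hN, mul_sum, ← sum_coe_sort (Icc (-(n : ℤ)) n)]
  refine sum_congr rfl fun k _ => ?_
  rw [← expMode_mul_conj]
  linear_combination (expMode k τ * conj (expMode k τ')) * hw k

noncomputable def interpolationFactor (n : ℕ) (κ : ℝ) (S : Finset ℝ) :
    Matrix (S ⊕ S) (Icc (-(n : ℤ)) n) ℂ :=
  fromRows (fourierRows n S 1) (fourierRows n S fun k => -(κ : ℂ)⁻¹ * (2 * Real.pi * I * k))

lemma interpolationFactor_mul_conjTranspose (n : ℕ) (κ : ℝ) (S : Finset ℝ) :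
    interpolationFactor n κ S * (interpolationFactor n κ S)ᴴ =
      (2 * n + 1 : ℂ) • (interpolationMatrix n κ S).map ofReal := by
  rw [interpolationFactor, conjTranspose_fromRows_eq_fromCols_conjTranspose,
    fromRows_mul_fromCols, interpolationMatrix, fromBlocks_map, fromBlocks_smul]
  have hconj (k : ℤ) : conj (2 * Real.pi * I * k) = -(2 * Real.pi * I * k) := by
    simp [map_ofNat]
  congr 1
  · rw [fourierRows_mul_conjTranspose (c := 1) (j := 0) fun k => by simp]
    congr 2; ext; simp
  · rw [fourierRows_mul_conjTranspose (c := κ⁻¹) (j := 1) fun k => by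
      rw [map_mul, hconj, Pi.one_apply, map_neg, map_inv₀, conj_ofReal]; push_cast; ring]
    congr 2; ext; simp [iteratedDeriv_one]
  · rw [fourierRows_mul_conjTranspose (c := -κ⁻¹) (j := 1) fun k => by
      rw [Pi.one_apply, map_one]; push_cast; ring]
    congr 2; ext; simp [iteratedDeriv_one]
  · rw [fourierRows_mul_conjTranspose (c := -(κ ^ 2)⁻¹) (j := 2) fun k => by
      rw [map_mul, hconj, map_neg, map_inv₀, conj_ofReal]; push_cast; ring]
    congr 2; ext; simp [iteratedDeriv_succ]

lemma injective_vecMul_interpolationFactor {n : ℕ} {κ : ℝ} {S : Finset ℝ} (hκ : κ ≠ 0)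
    (hS : ↑S ⊆ Set.Ico (0 : ℝ) 1) (hcard : S.card ≤ n) :
    Function.Injective (interpolationFactor n κ S).vecMul := by
  rw [← coe_vecMulLinear, injective_iff_map_eq_zero]
  intro v hv
  simp only [coe_vecMulLinear, interpolationFactor, vecMul_fromRows] at hv
  have hc : -(κ : ℂ)⁻¹ * (2 * Real.pi * I) ≠ 0 := by simp [hκ, Real.pi_ne_zero]
  obtain ⟨ha, hb⟩ := eq_zero_of_forall_sum_mul_zpow_eq_zero (n := n)
    (z := fun τ : S => expMode 1 τ) (a := v ∘ Sum.inl)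
    (b := fun τ => -(κ : ℂ)⁻¹ * (2 * Real.pi * I) * v (Sum.inr τ))
    (fun τ τ' h => Subtype.ext (injOn_expMode_one (hS τ.2) (hS τ'.2) h))
    (fun τ => exp_ne_zero _) (by simpa using hcard) fun k hk => by
      have hk' := congrFun hv ⟨k, hk⟩
      rw [Pi.add_apply, vecMul, vecMul, dotProduct, dotProduct, ← sum_add_distrib,
        Pi.zero_apply] at hk'
      rw [← hk']
      refine sum_congr rfl fun τ _ => ?_
      simp only [fourierRows, of_apply, Function.comp, Pi.one_apply, expMode_eq_zpow k]
      ring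
  ext (τ | τ)
  · exact congrFun ha τ
  · exact (mul_eq_zero.mp (congrFun hb τ)).resolve_left hc

open scoped ComplexOrder in
theorem isUnit_interpolationMatrix {n : ℕ} {κ : ℝ} {S : Finset ℝ} (hκ : κ ≠ 0)
    (hS : ↑S ⊆ Set.Ico (0 : ℝ) 1) (hcard : S.card ≤ n) :
    IsUnit (interpolationMatrix n κ S) := by
  have hpos := PosDef.mul_conjTranspose_self _ (injective_vecMul_interpolationFactor hκ hS hcard)
  rw [interpolationFactor_mul_conjTranspose] at hpos
  have hdet := hpos.det_pos.ne'
  rw [det_smul, show (interpolationMatrix n κ S).map ofReal = ofRealHom.mapMatrix _ from rfl,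
    ← RingHom.map_det] at hdet
  rw [isUnit_iff_isUnit_det, isUnit_iff_ne_zero]
  exact fun h => hdet (by simp [h])

lemma torusDist_le_abs (x : ℝ) : torusDist x ≤ |x| := by
  have : torusDist x ≤ |x - ((0 : ℤ) : ℝ)| :=
    csInf_le ⟨0, by rintro _ ⟨m, rfl⟩; exact abs_nonneg _⟩ ⟨0, rfl⟩
  simpa using this

lemma card_le_of_inv_le_abs_sub {n : ℕ} (hn : 0 < n) {S : Finset ℝ}
    (hS : ↑S ⊆ Set.Ico (0 : ℝ) 1)
    (hsep : ∀ τ ∈ S, ∀ τ' ∈ S, τ ≠ τ' → (n : ℝ)⁻¹ ≤ |τ - τ'|) :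
    S.card ≤ n := by
  have hn' : (0 : ℝ) < n := by exact_mod_cast hn
  -- distinct points lie in distinct cells `[m / n, (m + 1) / n)`
  calc S.card ≤ (Ico (0 : ℤ) n).card :=
        card_le_card_of_injOn (fun τ => ⌊τ * n⌋) (fun τ hτ => ?_)
          fun τ hτ τ' hτ' h => ?_
    _ = n := by simp
  · obtain ⟨h0, h1⟩ := hS hτ
    simp only [coe_Ico, Set.mem_Ico, Int.floor_nonneg, Int.floor_lt, Int.cast_natCast]
    constructor <;> nlinarith
  · by_contra hne
    have h1 := Int.abs_sub_lt_one_of_floor_eq_floor h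
    rw [← sub_mul, abs_mul, abs_of_pos hn'] at h1
    have h2 := (inv_le_iff_one_le_mul₀ hn').1 (hsep τ hτ τ' hτ' hne)
    linarith

/-- There is an absolute constant `C > 0` such that, whenever `n ≥ 1` and `S ⊂ [0,1)` has
at least two points, all at wrap-around distance at least `C(1+log|S|)/n` from one another,
the block matrix `[[D₀, κ⁻¹D₁], [−κ⁻¹D₁, −κ⁻²D₂]]` is invertible, where
`κ = 2π√(n(n+1)/3)` and `(D_j)_{τ,τ'}` is the `j`-th derivative of `D_N` at `τ − τ'`. -/
theorem interpolation_system_invertible :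
    ∃ C : ℝ, 0 < C ∧
      ∀ n : ℕ, 1 ≤ n → ∀ S : Finset ℝ, ↑S ⊆ Set.Ico (0 : ℝ) 1 → 2 ≤ S.card →
        (∀ τ ∈ S, ∀ τ' ∈ S, τ ≠ τ' →
          C * (1 + Real.log S.card) / n ≤ torusDist (τ - τ')) →
        IsUnit
          (Matrix.fromBlocks
            (Matrix.of fun τ τ' : {x // x ∈ S} => DN n ((τ : ℝ) - (τ' : ℝ)))
            ((2 * Real.pi * Real.sqrt ((n : ℝ) * ((n : ℝ) + 1) / 3))⁻¹ •
              Matrix.of fun τ τ' : {x // x ∈ S} => deriv (DN n) ((τ : ℝ) - (τ' : ℝ)))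
            (-((2 * Real.pi * Real.sqrt ((n : ℝ) * ((n : ℝ) + 1) / 3))⁻¹ •
              Matrix.of fun τ τ' : {x // x ∈ S} => deriv (DN n) ((τ : ℝ) - (τ' : ℝ))))
            (-(((2 * Real.pi * Real.sqrt ((n : ℝ) * ((n : ℝ) + 1) / 3)) ^ 2)⁻¹ •
              Matrix.of fun τ τ' : {x // x ∈ S} =>
                deriv (deriv (DN n)) ((τ : ℝ) - (τ' : ℝ))))) := by
  refine ⟨1, one_pos, fun n hn S hS _ hsep => ?_⟩
  have hn' : (0 : ℝ) < n := by exact_mod_cast hn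
  have hcard : S.card ≤ n := card_le_of_inv_le_abs_sub hn hS fun τ hτ τ' hτ' hne =>
    calc (n : ℝ)⁻¹ ≤ 1 * (1 + Real.log S.card) / n := by
          rw [one_mul, inv_eq_one_div]
          gcongr
          linarith [Real.log_natCast_nonneg S.card]
      _ ≤ torusDist (τ - τ') := hsep τ hτ τ' hτ' hne
      _ ≤ |τ - τ'| := torusDist_le_abs _
  exact isUnit_interpolationMatrix (by positivity) hS hcard
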